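/- arXiv:0807.2752 — 5 statements merged into one kernel-verified Lean document; each statement's English description precedes it below -/
import Mathlib

section
/- Let ρ > 0, γ ∈ (0,1), h > 0, t > 0. For a Poisson random variable N with mean ρt, one has exp(γht/(1-γ)) · E[(1+h/ρ)^{-γN/(1-γ)}] ≤ exp(γ h² t / (2ρ(1-γ)²)). -/
open ProbabilityTheory Real
open scoped NNReal

/-!
For `N` Poisson of mean `ν`, `E[x ^ N] = exp (ν (x - 1))`, so the claim is an inequality between
exponents. With `c = γ / (1 - γ)` and `u = h / ρ` it is `ν` times the second-order bound
`(1 + u) ^ (-c) ≤ 1 - c u + c (c + 1) u ^ 2 / 2` for `c, u ≥ 0`. The difference of the two sides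
vanishes at `u = 0` and has derivative `c ((c + 1) u - 1 + (1 + u) ^ (-(c + 1)))`, which is
nonnegative by Bernoulli's inequality for negative exponents.
-/

theorem hasSum_poissonPMFReal_mul_pow (r : ℝ≥0) (x : ℝ) :
    HasSum (fun n ↦ poissonPMFReal r n * x ^ n) (exp (r * (x - 1))) := by
  have h := (NormedSpace.expSeries_div_hasSum_exp ((r : ℝ) * x)).mul_left (exp (-r))
  rw [← Real.exp_eq_exp_ℝ, ← Real.exp_add, neg_add_eq_sub, ← mul_sub_one] at h
  refine h.congr_fun fun n ↦ ?_
  simp only [poissonPMFReal, mul_pow]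
  ring

theorem one_sub_mul_le_one_add_rpow_neg {q u : ℝ} (hq : 0 ≤ q) (hu : -1 < u) :
    1 - q * u ≤ (1 + u) ^ (-q) := by
  have hpos : 0 < 1 + u := by linarith
  have hlog : log (1 + u) ≤ u := by linarith [log_le_sub_one_of_pos hpos]
  calc 1 - q * u ≤ -q * log (1 + u) + 1 := by nlinarith
    _ ≤ exp (-q * log (1 + u)) := add_one_le_exp _
    _ = (1 + u) ^ (-q) := by rw [rpow_def_of_pos hpos, mul_comm]

theorem one_add_rpow_neg_le {c u : ℝ} (hc : 0 ≤ c) (hu : 0 ≤ u) :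
    (1 + u) ^ (-c) ≤ 1 - c * u + c * (c + 1) * u ^ 2 / 2 := by
  set f : ℝ → ℝ := fun v ↦ 1 - c * v + c * (c + 1) * v ^ 2 / 2 - (1 + v) ^ (-c)
  have hf : ∀ v, 0 ≤ v → HasDerivAt f (c * ((c + 1) * v - 1 + (1 + v) ^ (-(c + 1)))) v := by
    intro v hv
    have hpow := ((hasDerivAt_id' v).const_add 1).rpow_const (p := -c) (Or.inl (by linarith))
    refine ((((hasDerivAt_id' v).const_mul c).const_sub 1).add
      (((hasDerivAt_pow 2 v).const_mul (c * (c + 1))).div_const 2)).sub hpow |>.congr_deriv ?_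
    rw [neg_add', sub_eq_add_neg (-c)]
    push_cast
    ring
  have hmono : MonotoneOn f (Set.Ici 0) := by
    refine monotoneOn_of_hasDerivWithinAt_nonneg (convex_Ici 0)
      (fun v hv ↦ (hf v hv).continuousAt.continuousWithinAt)
      (fun v hv ↦ (hf v (interior_subset hv)).hasDerivWithinAt) fun v hv ↦ ?_
    rw [interior_Ici] at hv
    have := one_sub_mul_le_one_add_rpow_neg (q := c + 1) (u := v) (by linarith)
      (by linarith [hv.out])
    exact mul_nonneg hc (by linarith)
  have hf0 : f 0 = 0 := by simp [f]
  have := hmono (Set.mem_Ici.2 le_rfl) (Set.mem_Ici.2 hu) hu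
  simp only [hf0, f] at this
  linarith

theorem exp_mul_tsum_poissonPMFReal_mul_one_add_rpow_neg_le (r : ℝ≥0) {c u : ℝ}
    (hc : 0 ≤ c) (hu : 0 ≤ u) :
    exp (r * c * u) * ∑' n : ℕ, poissonPMFReal r n * ((1 + u) ^ (-c)) ^ n
      ≤ exp (r * c * (c + 1) * u ^ 2 / 2) := by
  rw [(hasSum_poissonPMFReal_mul_pow r _).tsum_eq, ← exp_add, exp_le_exp]
  have := mul_le_mul_of_nonneg_left (one_add_rpow_neg_le hc hu) r.coe_nonneg
  linarith

/-- Moment bound for the inverse Radon–Nikodym density when changing the jump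
rate from `ρ` to `ρ + h`: for a Poisson random variable `N` of mean `ρ t`,
`exp(γht/(1-γ)) E[(1+h/ρ)^{-γN/(1-γ)}] ≤ exp(γ h² t / (2ρ(1-γ)²))`. -/
theorem poisson_density_moment_bound (ρ γ h t : ℝ) (hρ : 0 < ρ)
    (hγ0 : 0 < γ) (hγ1 : γ < 1) (hh : 0 < h) (ht : 0 < t) :
    Real.exp (γ * h * t / (1 - γ)) *
        ∑' n : ℕ, poissonPMFReal (Real.toNNReal (ρ * t)) n *
          ((1 + h / ρ) ^ (-(γ / (1 - γ)))) ^ n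
      ≤ Real.exp (γ * h ^ 2 * t / (2 * ρ * (1 - γ) ^ 2)) := by
  have hγ : 0 < 1 - γ := by linarith
  have key := exp_mul_tsum_poissonPMFReal_mul_one_add_rpow_neg_le (ρ * t).toNNReal
    (div_nonneg hγ0.le hγ.le) (div_nonneg hh.le hρ.le)
  rw [coe_toNNReal _ (by positivity)] at key
  have hlin : ρ * t * (γ / (1 - γ)) * (h / ρ) = γ * h * t / (1 - γ) := by
    field_simp
  have hquad : ρ * t * (γ / (1 - γ)) * (γ / (1 - γ) + 1) * (h / ρ) ^ 2 / 2
      = γ * h ^ 2 * t / (2 * ρ * (1 - γ) ^ 2) := by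
    field_simp
    ring
  rwa [hlin, hquad] at key
end

section
/- Let ι* = {0 = ι_0 < ι_1 < ι_2 < ...} be a renewal process on ℕ whose i.i.d. inter-arrival distribution K* satisfies ∑_{n≥1} K*(n) = 1 and K*(n) ~ C n^{-2} as n → ∞ for some C > 0. Then for any c > 0 and 0 < δ₁ < δ₂ < 1, N^{1-δ₂} · E[exp(-c N^{-δ₁} |ι* ∩ [0,N]|)] → 0 as N → ∞. -/
/-!
If fewer than `m + 1` renewal epochs lie in `[0, N]` (with `m ≤ N`), then `ι_m > N`. The tail
hypothesis gives `P(U ≥ t) = O(1/t)`, hence `E[min(U, N + 1)] = O(log N)`, and Markov's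
inequality for the truncated sum gives `P(ι_m > N) = O(m log N / N)`. So
`E[exp(-c N^{-δ₁} |ι* ∩ [0,N]|)] ≤ exp(-c N^{-δ₁} (m + 1)) + O(m log N / N)`, and the choice
`m = ⌊N^δ⌋` with `δ₁ < δ < δ₂` makes both terms `o(N^{δ₂ - 1})`.
-/

open MeasureTheory ProbabilityTheory Filter Finset

lemma sum_Ico_inv_sq_le {t : ℕ} (ht : 1 ≤ t) (n : ℕ) :
    ∑ i ∈ Ico t n, ((i : ℝ) ^ 2)⁻¹ ≤ 2 / t := by
  obtain ⟨k, rfl⟩ := Nat.exists_eq_add_of_le' ht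
  simpa [Finset.Ico_add_one_left_eq_Ioo] using sum_Ioo_inv_sq_le (α := ℝ) k n

lemma min_sum_le_sum_min {ι : Type*} (s : Finset ι) (f : ι → ℕ) (M : ℕ) :
    min (∑ i ∈ s, f i) M ≤ ∑ i ∈ s, min (f i) M := by
  classical
  induction s using Finset.induction_on with
  | empty => simp
  | insert j s hj ih =>
    rw [sum_insert hj, sum_insert hj]
    omega

/-- The number of renewal epochs `ι_k = a 0 + ⋯ + a (k - 1)`, `k ≤ N`, in `[0, N]`. -/
def renewalCount (N : ℕ) (a : ℕ → ℕ) : ℕ :=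
  #{k ∈ range (N + 1) | ∑ i ∈ range k, a i ≤ N}

lemma add_one_le_renewalCount {N m : ℕ} {a : ℕ → ℕ} (hmN : m ≤ N) (h : ∑ i ∈ range m, a i ≤ N) :
    m + 1 ≤ renewalCount N a := by
  unfold renewalCount
  have hsub : range (m + 1) ⊆ {k ∈ range (N + 1) | ∑ i ∈ range k, a i ≤ N} := by
    intro k hk
    rw [mem_range] at hk
    rw [mem_filter, mem_range]
    exact ⟨by omega, (sum_le_sum_of_subset (range_subset_range.2 (by omega))).trans h⟩
  simpa using card_le_card hsub

lemma tendsto_rpow_mul_exp_neg_mul_rpow {p q c : ℝ} (hq : 0 < q) (hc : 0 < c) :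
    Tendsto (fun x : ℝ => x ^ p * Real.exp (-c * x ^ q)) atTop (nhds 0) := by
  refine ((tendsto_rpow_mul_exp_neg_mul_atTop_nhds_zero (p / q) c hc).comp
    (tendsto_rpow_atTop hq)).congr' ?_
  filter_upwards [eventually_ge_atTop 0] with x hx
  simp [← Real.rpow_mul hx, mul_div_cancel₀ p hq.ne']

lemma tendsto_rpow_neg_mul_one_add_log {η : ℝ} (hη : 0 < η) :
    Tendsto (fun x : ℝ => x ^ (-η) * (1 + Real.log x)) atTop (nhds 0) := by
  have hlog : Tendsto (fun x : ℝ => Real.log x / x ^ η) atTop (nhds 0) :=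
    (isLittleO_log_rpow_atTop hη).tendsto_div_nhds_zero
  refine (by simpa using (tendsto_rpow_neg_atTop hη).add hlog :
    Tendsto (fun x : ℝ => x ^ (-η) + Real.log x / x ^ η) atTop (nhds 0)).congr' ?_
  filter_upwards [eventually_ge_atTop 0] with x hx
  rw [Real.rpow_neg hx]
  ring

section

variable {Ω : Type*} [MeasurableSpace Ω] {μ : Measure Ω}

lemma measureReal_ge_eq_tsum [IsFiniteMeasure μ] {X : Ω → ℕ} (hX : Measurable X) (t : ℕ) :
    μ.real {ω | t ≤ X ω} = ∑' j, μ.real {ω | X ω = t + j} := by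
  have hunion : {ω | t ≤ X ω} = ⋃ j : ℕ, {ω | X ω = t + j} := by
    ext ω
    simp only [Set.mem_ofPred_eq, Set.mem_iUnion]
    exact ⟨fun h => ⟨X ω - t, by omega⟩, fun ⟨j, hj⟩ => by omega⟩
  have hdisj : Pairwise (Function.onFun Disjoint fun j : ℕ => {ω | X ω = t + j}) :=
    fun i j hij => Set.disjoint_left.2 fun ω hi hj => hij (by simp_all)
  rw [hunion, measureReal_def, measure_iUnion hdisj fun j => hX (measurableSet_singleton _),
    ENNReal.tsum_toReal_eq fun j => measure_ne_top μ _]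
  rfl

lemma measureReal_ge_le_of_mul_sq_le [IsFiniteMeasure μ] {X : Ω → ℕ} (hX : Measurable X)
    {B : ℝ} (hB : ∀ n : ℕ, μ.real {ω | X ω = n} * n ^ 2 ≤ B) {t : ℕ} (ht : 1 ≤ t) :
    μ.real {ω | t ≤ X ω} ≤ 2 * B / t := by
  have hB0 : 0 ≤ B := by simpa using hB 0
  have hpoint : ∀ n : ℕ, t ≤ n → μ.real {ω | X ω = n} ≤ B * ((n : ℝ) ^ 2)⁻¹ := by
    intro n hn
    have hn2 : (0 : ℝ) < (n : ℝ) ^ 2 := by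
      have : (0 : ℝ) < n := by exact_mod_cast ht.trans hn
      positivity
    rw [← div_eq_mul_inv, le_div_iff₀ hn2]
    exact hB n
  rw [measureReal_ge_eq_tsum hX]
  refine Real.tsum_le_of_sum_range_le (fun _ => measureReal_nonneg) fun M => ?_
  calc ∑ j ∈ range M, μ.real {ω | X ω = t + j}
      ≤ ∑ j ∈ range M, B * (((t + j : ℕ) : ℝ) ^ 2)⁻¹ :=
        sum_le_sum fun j _ => hpoint (t + j) (by omega)
    _ = B * ∑ i ∈ Ico t (t + M), ((i : ℝ) ^ 2)⁻¹ := by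
        rw [← mul_sum, sum_Ico_eq_sum_range, Nat.add_sub_cancel_left]
    _ ≤ B * (2 / t) := mul_le_mul_of_nonneg_left (sum_Ico_inv_sq_le ht _) hB0
    _ = 2 * B / t := by ring

lemma integral_min_eq_sum_measureReal [IsFiniteMeasure μ] {X : Ω → ℕ} (hX : Measurable X)
    (M : ℕ) : ∫ ω, ((min (X ω) M : ℕ) : ℝ) ∂μ = ∑ t ∈ Icc 1 M, μ.real {ω | t ≤ X ω} := by
  have hmeas : ∀ t : ℕ, MeasurableSet {ω | t ≤ X ω} := fun t => hX measurableSet_Ici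
  have hpoint : ∀ ω, ((min (X ω) M : ℕ) : ℝ)
      = ∑ t ∈ Icc 1 M, {ω | t ≤ X ω}.indicator (1 : Ω → ℝ) ω := by
    intro ω
    simp only [Set.indicator_apply, Set.mem_ofPred_eq, Pi.one_apply, sum_boole]
    have : {t ∈ Icc 1 M | t ≤ X ω} = Icc 1 (min (X ω) M) := by
      ext t
      simp only [mem_filter, mem_Icc]
      omega
    simp [this]
  simp_rw [hpoint]
  rw [integral_finsetSum _ fun t _ => (integrable_const 1).indicator (hmeas t)]
  exact sum_congr rfl fun t _ => integral_indicator_one (hmeas t)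

lemma integral_min_le_of_measureReal_ge_le [IsFiniteMeasure μ] {X : Ω → ℕ} (hX : Measurable X)
    {A : ℝ} (hA : 0 ≤ A) (htail : ∀ t : ℕ, 1 ≤ t → μ.real {ω | t ≤ X ω} ≤ A / t) (M : ℕ) :
    ∫ ω, ((min (X ω) M : ℕ) : ℝ) ∂μ ≤ A * (1 + Real.log M) := by
  rw [integral_min_eq_sum_measureReal hX]
  calc ∑ t ∈ Icc 1 M, μ.real {ω | t ≤ X ω}
      ≤ ∑ t ∈ Icc 1 M, A * (t : ℝ)⁻¹ :=
        sum_le_sum fun t ht => (htail t (mem_Icc.1 ht).1).trans_eq (div_eq_mul_inv _ _)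
    _ = A * (harmonic M : ℝ) := by rw [← mul_sum, harmonic_eq_sum_Icc]; push_cast; rfl
    _ ≤ A * (1 + Real.log M) := mul_le_mul_of_nonneg_left (harmonic_le_one_add_log M) hA

lemma measureReal_sum_ge_le_of_identDistrib [IsFiniteMeasure μ] {U : ℕ → Ω → ℕ}
    (hident : ∀ i, IdentDistrib (U i) (U 0) μ μ) (m : ℕ) {M : ℕ} (hM : 0 < M) :
    μ.real {ω | M ≤ ∑ i ∈ range m, U i ω} ≤ m * (∫ ω, ((min (U 0 ω) M : ℕ) : ℝ) ∂μ) / M := by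
  set T : ℕ → Ω → ℝ := fun i ω => ((min (U i ω) M : ℕ) : ℝ)
  have hTident : ∀ i, IdentDistrib (T i) (T 0) μ μ := fun i =>
    (hident i).comp (measurable_from_nat (f := fun n : ℕ => ((min n M : ℕ) : ℝ)))
  have hTint : ∀ i, Integrable (T i) μ := fun i =>
    .of_bound (hTident i).aemeasurable_fst.aestronglyMeasurable M
      (Eventually.of_forall fun ω => by
        rw [Real.norm_natCast]; exact_mod_cast min_le_right _ _)
  -- Truncating each summand at `M` does not affect the event that the sum reaches `M`.
  have hsub : {ω | M ≤ ∑ i ∈ range m, U i ω} ⊆ {ω | (M : ℝ) ≤ ∑ i ∈ range m, T i ω} := by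
    intro ω hω
    have := (min_eq_right hω).symm.le.trans (min_sum_le_sum_min (range m) (U · ω) M)
    simpa [T] using (Nat.cast_le (α := ℝ)).2 this
  have hmarkov := mul_meas_ge_le_integral_of_nonneg (f := fun ω => ∑ i ∈ range m, T i ω)
    (Eventually.of_forall fun ω => sum_nonneg fun i _ => Nat.cast_nonneg _)
    (integrable_finsetSum _ fun i _ => hTint i) (M : ℝ)
  rw [integral_finsetSum _ fun i _ => hTint i, sum_congr rfl fun i _ => (hTident i).integral_eq,
    sum_const, card_range, nsmul_eq_mul] at hmarkov
  rw [le_div_iff₀ (by exact_mod_cast hM), mul_comm]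
  exact (mul_le_mul_of_nonneg_left (measureReal_mono hsub) (Nat.cast_nonneg M)).trans hmarkov

lemma integral_le_add_measureReal [IsProbabilityMeasure μ] {f : Ω → ℝ} {s : Set Ω} {ε : ℝ}
    (hs : MeasurableSet s) (hf0 : ∀ ω, 0 ≤ f ω) (hf1 : ∀ ω, f ω ≤ 1) (hε : 0 ≤ ε)
    (hfs : ∀ ω ∉ s, f ω ≤ ε) : ∫ ω, f ω ∂μ ≤ ε + μ.real s := by
  have hind : Integrable (s.indicator (1 : Ω → ℝ)) μ := (integrable_const 1).indicator hs
  calc ∫ ω, f ω ∂μ ≤ ∫ ω, (ε + s.indicator 1 ω) ∂μ := by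
        refine integral_mono_of_nonneg (Eventually.of_forall hf0)
          ((integrable_const ε).add hind) (Eventually.of_forall fun ω => ?_)
        by_cases hω : ω ∈ s
        · simpa [hω] using (hf1 ω).trans (by linarith)
        · simpa [hω] using hfs ω hω
    _ = ε + μ.real s := by
        rw [integral_add (integrable_const ε) hind, integral_indicator_one hs]
        simp

lemma integral_exp_mul_renewalCount_le [IsProbabilityMeasure μ] {U : ℕ → Ω → ℕ}
    (hmeas : ∀ i, Measurable (U i)) (hident : ∀ i, IdentDistrib (U i) (U 0) μ μ) {A : ℝ} (hA : 0 ≤ A)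
    (htail : ∀ t : ℕ, 1 ≤ t → μ.real {ω | t ≤ U 0 ω} ≤ A / t) {a : ℝ} (ha : a ≤ 0)
    {m N : ℕ} (hmN : m ≤ N) :
    ∫ ω, Real.exp (a * renewalCount N (U · ω)) ∂μ
      ≤ Real.exp (a * (m + 1)) + m * (A * (1 + Real.log (N + 1))) / (N + 1) := by
  have hS : MeasurableSet {ω | N + 1 ≤ ∑ i ∈ range m, U i ω} :=
    measurableSet_le measurable_const (Finset.measurable_sum _ fun i _ => hmeas i)
  calc ∫ ω, Real.exp (a * renewalCount N (U · ω)) ∂μ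
      ≤ Real.exp (a * (m + 1)) + μ.real {ω | N + 1 ≤ ∑ i ∈ range m, U i ω} := by
        refine integral_le_add_measureReal hS (fun ω => (Real.exp_pos _).le)
          (fun ω => Real.exp_le_one_iff.2 (mul_nonpos_of_nonpos_of_nonneg ha (Nat.cast_nonneg _)))
          (Real.exp_pos _).le fun ω hω => Real.exp_le_exp.2 (mul_le_mul_of_nonpos_left ?_ ha)
        exact_mod_cast add_one_le_renewalCount hmN (by simpa using hω)
    _ ≤ Real.exp (a * (m + 1)) + m * (A * (1 + Real.log (N + 1))) / (N + 1) := by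
        have hP := measureReal_sum_ge_le_of_identDistrib hident m (M := N + 1) (by omega)
        have hE := integral_min_le_of_measureReal_ge_le (hmeas 0) hA htail (N + 1)
        push_cast at hP hE
        gcongr
        exact hP.trans (by gcongr)

end

lemma rpow_mul_block_bound_le {c δ₁ δ δ₂ X : ℝ} (hc : 0 ≤ c) (hδ : 0 ≤ δ) (hδ₂ : δ₂ ≤ 1)
    (hX : 0 ≤ X) {N : ℕ} (hN : 1 ≤ N) :
    (N : ℝ) ^ (1 - δ₂) * (Real.exp (-c * (N : ℝ) ^ (-δ₁) * (⌊(N : ℝ) ^ δ⌋₊ + 1))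
        + ⌊(N : ℝ) ^ δ⌋₊ * X / (N + 1))
      ≤ (N : ℝ) ^ (1 - δ₂) * Real.exp (-c * (N : ℝ) ^ (δ - δ₁))
        + ((N : ℝ) + 1) ^ (δ - δ₂) * X := by
  set m := ⌊(N : ℝ) ^ δ⌋₊
  have hN : (0 : ℝ) < N := by exact_mod_cast hN
  have hm_lower : (N : ℝ) ^ δ ≤ m + 1 := (Nat.lt_floor_add_one _).le
  have hm_upper : (m : ℝ) ≤ ((N : ℝ) + 1) ^ δ := (Nat.floor_le (by positivity)).trans
    (Real.rpow_le_rpow hN.le (by linarith) hδ)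
  have hexp : -c * (N : ℝ) ^ (-δ₁) * (m + 1) ≤ -c * (N : ℝ) ^ (δ - δ₁) := by
    rw [sub_eq_add_neg, Real.rpow_add hN, mul_assoc, mul_comm ((N : ℝ) ^ δ)]
    exact mul_le_mul_of_nonpos_left (mul_le_mul_of_nonneg_left hm_lower (by positivity))
      (by linarith)
  have hpow : (N : ℝ) ^ (1 - δ₂) * m ≤ ((N : ℝ) + 1) ^ (δ - δ₂) * ((N : ℝ) + 1) := calc
    (N : ℝ) ^ (1 - δ₂) * m ≤ ((N : ℝ) + 1) ^ (1 - δ₂) * ((N : ℝ) + 1) ^ δ :=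
      mul_le_mul (Real.rpow_le_rpow hN.le (by linarith) (by linarith)) hm_upper
        (Nat.cast_nonneg _) (by positivity)
    _ = ((N : ℝ) + 1) ^ (δ - δ₂) * ((N : ℝ) + 1) := by
      rw [← Real.rpow_add (by positivity), ← Real.rpow_add_one (by positivity)]
      ring_nf
  rw [mul_add]
  refine add_le_add (mul_le_mul_of_nonneg_left (Real.exp_le_exp.2 hexp) (by positivity)) ?_
  calc (N : ℝ) ^ (1 - δ₂) * (m * X / (N + 1)) = (N : ℝ) ^ (1 - δ₂) * m * X / (N + 1) := by ring
    _ ≤ ((N : ℝ) + 1) ^ (δ - δ₂) * ((N : ℝ) + 1) * X / (N + 1) := by gcongr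
    _ = ((N : ℝ) + 1) ^ (δ - δ₂) * X := by field_simp

lemma exists_block_length_tendsto {A c δ₁ δ₂ : ℝ} (hA : 0 ≤ A) (hc : 0 < c) (h1 : 0 < δ₁)
    (h12 : δ₁ < δ₂) (h2 : δ₂ < 1) :
    ∃ m : ℕ → ℕ, (∀ᶠ N in atTop, m N ≤ N) ∧
      Tendsto (fun N : ℕ => (N : ℝ) ^ (1 - δ₂) * (Real.exp (-c * (N : ℝ) ^ (-δ₁) * (m N + 1))
        + m N * (A * (1 + Real.log (N + 1))) / (N + 1))) atTop (nhds 0) := by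
  obtain ⟨δ, hδ₁, hδ₂⟩ := exists_between h12
  refine ⟨fun N => ⌊(N : ℝ) ^ δ⌋₊, ?_, ?_⟩
  · filter_upwards [eventually_ge_atTop 1] with N hN
    exact Nat.floor_le_of_le (Real.rpow_le_self_of_one_le (by exact_mod_cast hN) (by linarith))
  have hX : ∀ N : ℕ, 0 ≤ A * (1 + Real.log (N + 1)) := fun N => mul_nonneg hA
    (by linarith [Real.log_nonneg (by linarith [N.cast_nonneg (α := ℝ)] : (1 : ℝ) ≤ N + 1)])
  have hlim : Tendsto (fun N : ℕ => (N : ℝ) ^ (1 - δ₂) * Real.exp (-c * (N : ℝ) ^ (δ - δ₁))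
      + ((N : ℝ) + 1) ^ (δ - δ₂) * (A * (1 + Real.log (N + 1)))) atTop (nhds 0) := by
    have h₁ := (tendsto_rpow_mul_exp_neg_mul_rpow (p := 1 - δ₂) (sub_pos.2 hδ₁) hc).comp
      tendsto_natCast_atTop_atTop
    have h₂ := ((tendsto_rpow_neg_mul_one_add_log (sub_pos.2 hδ₂)).comp
      (tendsto_atTop_add_const_right _ 1 tendsto_natCast_atTop_atTop)).const_mul A
    simpa [mul_left_comm A] using h₁.add h₂
  refine squeeze_zero' (Eventually.of_forall fun N => by have := hX N; positivity) ?_ hlim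
  filter_upwards [eventually_ge_atTop 1] with N hN
  exact rpow_mul_block_bound_le hc.le (by linarith) h2.le (hX N) hN

theorem renewal_fractional_decay_general
    {Ω : Type*} [MeasurableSpace Ω] (μ : Measure Ω) [IsProbabilityMeasure μ]
    (U : ℕ → Ω → ℕ) (hmeas : ∀ i, Measurable (U i))
    (hident : ∀ i, Measure.map (U i) μ = Measure.map (U 0) μ)
    (K : ℕ → ℝ) (hK : ∀ n, (μ {ω | U 0 ω = n}).toReal = K n)
    (C : ℝ)
    (hKtail : Tendsto (fun n : ℕ => K n * (n : ℝ) ^ 2) atTop (nhds C))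
    (c δ₁ δ₂ : ℝ) (hc : 0 < c) (h1 : 0 < δ₁) (h12 : δ₁ < δ₂) (h2 : δ₂ < 1) :
    Tendsto
      (fun N : ℕ => (N : ℝ) ^ (1 - δ₂) *
        ∫ ω, Real.exp (-c * (N : ℝ) ^ (-δ₁) *
          (((Finset.range (N + 1)).filter
            (fun k => ∑ i ∈ Finset.range k, U i ω ≤ N)).card : ℝ)) ∂μ)
      atTop (nhds 0) := by
  obtain ⟨B, hB⟩ := hKtail.bddAbove_range
  have hKB : ∀ n : ℕ, μ.real {ω | U 0 ω = n} * n ^ 2 ≤ B := fun n => by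
    rw [measureReal_def, hK]
    exact hB ⟨n, rfl⟩
  have hB0 : 0 ≤ B := by simpa using hKB 0
  have hident' : ∀ i, IdentDistrib (U i) (U 0) μ μ := fun i =>
    ⟨(hmeas i).aemeasurable, (hmeas 0).aemeasurable, hident i⟩
  obtain ⟨m, hmN, hlim⟩ :=
    exists_block_length_tendsto (mul_nonneg zero_le_two hB0) hc h1 h12 h2
  refine squeeze_zero' (Eventually.of_forall fun N => by positivity) ?_ hlim
  filter_upwards [hmN] with N hN
  gcongr
  exact integral_exp_mul_renewalCount_le hmeas hident' (mul_nonneg zero_le_two hB0)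
    (fun t => measureReal_ge_le_of_mul_sq_le (hmeas 0) hKB)
    (mul_nonpos_of_nonpos_of_nonneg (neg_nonpos.2 hc.le) (by positivity)) hN

/-- Renewal process estimate (Proposition A.2, case `α = 1`):
if the i.i.d. inter-arrival distribution `K` on `ℕ` satisfies `∑_{n≥1} K n = 1`
and `K n ~ C n^{-2}`, then for any `c > 0` and `0 < δ₁ < δ₂ < 1`,
`N^{1-δ₂} E[exp(-c N^{-δ₁} |ι* ∩ [0,N]|)] → 0` as `N → ∞`, where
`|ι* ∩ [0,N]|` is the number of renewal epochs `ι_k = U_1 + ⋯ + U_k ≤ N`. -/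
theorem renewal_fractional_decay
    {Ω : Type*} [MeasurableSpace Ω] (μ : Measure Ω) [IsProbabilityMeasure μ]
    (U : ℕ → Ω → ℕ) (hmeas : ∀ i, Measurable (U i))
    (hindep : iIndepFun U μ)
    (hident : ∀ i, Measure.map (U i) μ = Measure.map (U 0) μ)
    (K : ℕ → ℝ) (hK : ∀ n, (μ {ω | U 0 ω = n}).toReal = K n)
    (hK0 : K 0 = 0) (hKsum : ∑' n, K n = 1)
    (C : ℝ) (hC : 0 < C)
    (hKtail : Tendsto (fun n : ℕ => K n * (n : ℝ) ^ 2) atTop (nhds C))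
    (c δ₁ δ₂ : ℝ) (hc : 0 < c) (h1 : 0 < δ₁) (h12 : δ₁ < δ₂) (h2 : δ₂ < 1) :
    Tendsto
      (fun N : ℕ => (N : ℝ) ^ (1 - δ₂) *
        ∫ ω, Real.exp (-c * (N : ℝ) ^ (-δ₁) *
          (((Finset.range (N + 1)).filter
            (fun k => ∑ i ∈ Finset.range k, U i ω ≤ N)).card : ℝ)) ∂μ)
      atTop (nhds 0) :=
  renewal_fractional_decay_general μ U hmeas hident K hK C hKtail c δ₁ δ₂ hc h1 h12 h2
end

section
/- With φ(k) = (1/d)∑ cos k_i and ψ_h(k) = φ(k)² - (h/d²)∑ sin²(k_i) (h > 0 small), define G^{X-Y} = (2π)^{-d}∫ φ²/(1-φ²) dk and G_{h,odd} = (2π)^{-d}∫ φ²(1+φ²)/(1-φ²ψ_h) dk. Then G^{X-Y} - G_{h,odd} = (h/((2π)^d d²)) ∫ φ⁴ (∑_i sin² k_i) / ((1-φ²)(1-φ²ψ_h)) dk, which is strictly positive for d ≥ 4 and h > 0. -/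
/-!
Write `S(k) = ∑ sin² kᵢ`. Cauchy–Schwarz gives `(∑ cos kᵢ)² ≤ d ∑ cos² kᵢ = d (d - S)`, i.e.
`1 - φ² ≥ S/d`, and since `ψ_h ≤ φ² ≤ 1` also `1 - φ² ψ_h ≥ S/d`. Hence all three integrands are
`O(1/S)`, and the identity is the pointwise identity of the integrands, integrated. By AM–GM,
`1/S ≤ d⁻¹ ∏ |sin kᵢ|^(-2/d)`, a product of one-variable functions that are integrable on
`[-π, π]` because `2/d < 1` (Jordan's inequality `sin x ≥ 2x/π` near the zeros of `sin`), so `1/S`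
is integrable. Positivity: the difference integrand is nonnegative, and positive on `(0, π/2)^d`.
-/

open MeasureTheory Real Set

theorem intervalIntegrable_abs_sin_rpow_neg_zero_pi_div_two {r : ℝ} (hr0 : 0 ≤ r)
    (hr1 : r < 1) :
    IntervalIntegrable (fun x => |sin x| ^ (-r)) volume 0 (π / 2) := by
  refine ((intervalIntegral.intervalIntegrable_rpow' (by linarith : -1 < -r)).const_mul
    ((2 / π) ^ (-r))).mono_fun
    (by fun_prop : Measurable fun x => |sin x| ^ (-r)).aestronglyMeasurable ?_
  rw [uIoc_of_le (by positivity)]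
  refine (ae_restrict_iff' measurableSet_Ioc).2 (.of_forall fun x ⟨hx0, hxπ⟩ => ?_)
  have hsin : 2 / π * x ≤ sin x := mul_le_sin hx0.le hxπ
  have hsin_pos : 0 < sin x := (by positivity : 0 < 2 / π * x).trans_le hsin
  dsimp only
  rw [norm_of_nonneg (by positivity), norm_of_nonneg (by positivity), abs_of_pos hsin_pos,
    ← mul_rpow (by positivity) hx0.le]
  exact rpow_le_rpow_of_nonpos (by positivity) hsin (by linarith)

theorem integrableOn_abs_sin_rpow_neg {r : ℝ} (hr0 : 0 ≤ r) (hr1 : r < 1) :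
    IntegrableOn (fun x => |sin x| ^ (-r)) (Icc (-π) π) := by
  set f : ℝ → ℝ := fun x => |sin x| ^ (-r)
  have h₁ : IntervalIntegrable f volume 0 (π / 2) :=
    intervalIntegrable_abs_sin_rpow_neg_zero_pi_div_two hr0 hr1
  have h₂ : IntervalIntegrable f volume (π / 2) π := by
    simpa [f, sin_pi_sub, sub_half] using (h₁.comp_sub_left π).symm
  have h₃ : IntervalIntegrable f volume (-π) π := by
    have h₀ := h₁.trans h₂
    refine IntervalIntegrable.trans ?_ h₀
    simpa [f, sin_neg] using ((IntervalIntegrable.iff_comp_neg (by finiteness)).1 h₀).symm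
  rw [integrableOn_Icc_iff_integrableOn_Ioc, ← uIoc_of_le (by linarith [pi_pos])]
  exact h₃.def'

theorem integrableOn_prod_abs_sin_rpow_neg {ι : Type*} [Fintype ι] {r : ℝ} (hr0 : 0 ≤ r)
    (hr1 : r < 1) :
    IntegrableOn (fun k : ι → ℝ => ∏ i, |sin (k i)| ^ (-r)) (univ.pi fun _ => Icc (-π) π) := by
  rw [IntegrableOn, volume_pi, Measure.restrict_pi_pi]
  exact Integrable.fintype_prod fun _ => integrableOn_abs_sin_rpow_neg hr0 hr1

theorem inv_sum_le_prod_rpow_neg {ι : Type*} [Fintype ι] [Nonempty ι] {z : ι → ℝ}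
    (hz : ∀ i, 0 < z i) :
    (∑ i, z i)⁻¹ ≤ (Fintype.card ι : ℝ)⁻¹ * ∏ i, z i ^ (-(Fintype.card ι : ℝ)⁻¹) := by
  set n : ℝ := (Fintype.card ι : ℝ)
  have hn : 0 < n := by positivity
  have amgm : ∏ i, z i ^ n⁻¹ ≤ n⁻¹ * ∑ i, z i := by
    simpa [← Finset.mul_sum] using geom_mean_le_arith_mean_weighted Finset.univ (fun _ => n⁻¹) z
      (fun _ _ => by positivity) (by simp [n, hn.ne']) (fun i _ => (hz i).le)
  have hP : 0 < ∏ i, z i ^ n⁻¹ := Finset.prod_pos fun i _ => rpow_pos_of_pos (hz i) _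
  calc (∑ i, z i)⁻¹ ≤ (n * ∏ i, z i ^ n⁻¹)⁻¹ := by
        gcongr; exact (le_inv_mul_iff₀ hn).1 amgm
    _ = n⁻¹ * ∏ i, z i ^ (-n⁻¹) := by
        simp_rw [mul_inv, ← Finset.prod_inv_distrib, rpow_neg (hz _).le]

theorem ae_forall_sin_ne_zero {ι : Type*} [Fintype ι] :
    ∀ᵐ k : ι → ℝ, ∀ i, sin (k i) ≠ 0 := by
  have hzero : ∀ᵐ x : ℝ, sin x ≠ 0 := by
    refine measure_mono_null (fun x hx => ?_) ((countable_range fun n : ℤ => n * π).measure_zero _)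
    simpa [eq_comm] using sin_eq_zero_iff.1 (not_not.1 hx)
  exact ae_all_iff.2 fun i =>
    (Measure.tendsto_eval_ae_ae (μ := fun _ : ι => (volume : Measure ℝ)) (i := i)).eventually hzero

theorem ae_sum_sin_sq_pos {ι : Type*} [Fintype ι] [Nonempty ι] :
    ∀ᵐ k : ι → ℝ, 0 < ∑ i, sin (k i) ^ 2 := by
  filter_upwards [ae_forall_sin_ne_zero] with k hk
  exact Finset.sum_pos (fun i _ => by positivity [hk i]) Finset.univ_nonempty

theorem integrableOn_inv_sum_sin_sq {ι : Type*} [Fintype ι] (hι : 2 < Fintype.card ι) :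
    IntegrableOn (fun k : ι → ℝ => (∑ i, sin (k i) ^ 2)⁻¹) (univ.pi fun _ => Icc (-π) π) := by
  have : Nonempty ι := Fintype.card_pos_iff.1 (by omega)
  set n : ℝ := (Fintype.card ι : ℝ)
  have hr1 : 2 * n⁻¹ < 1 := by
    rw [← div_eq_mul_inv, div_lt_one (by positivity)]; exact (Nat.cast_lt (α := ℝ)).2 hι
  refine ((integrableOn_prod_abs_sin_rpow_neg (by positivity) hr1).const_mul n⁻¹).mono'
    (by fun_prop : Measurable fun k : ι → ℝ => (∑ i, sin (k i) ^ 2)⁻¹).aestronglyMeasurable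
    (ae_restrict_of_ae ?_)
  filter_upwards [ae_forall_sin_ne_zero] with k hk
  have hsq : ∀ i, 0 < sin (k i) ^ 2 := fun i => by positivity [hk i]
  rw [norm_of_nonneg (by positivity)]
  convert inv_sum_le_prod_rpow_neg hsq using 3 with i
  rw [← sq_abs, ← rpow_natCast, ← rpow_mul (abs_nonneg _), Nat.cast_ofNat, mul_neg]

theorem sum_sin_sq_div_le_one_sub_sq (d : ℕ) (k : Fin d → ℝ) :
    (∑ i, sin (k i) ^ 2) / d ≤ 1 - (1 / d * ∑ i, cos (k i)) ^ 2 := by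
  rcases Nat.eq_zero_or_pos d with rfl | hd
  · simp
  have hd' : (0 : ℝ) < d := by exact_mod_cast hd
  have hcs : (∑ i, cos (k i)) ^ 2 ≤ d * ∑ i, cos (k i) ^ 2 := by
    simpa using sq_sum_le_card_mul_sum_sq (s := Finset.univ) (f := fun i => cos (k i))
  have hcos : ∑ i, cos (k i) ^ 2 = d - ∑ i, sin (k i) ^ 2 := by
    simp [cos_sq', Finset.sum_sub_distrib]
  rw [div_le_iff₀ hd', mul_pow, sub_mul]
  field_simp
  nlinarith

theorem sum_cos_pos_of_mem_pi_Ioo {ι : Type*} [Fintype ι] [Nonempty ι] {k : ι → ℝ}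
    (hk : k ∈ univ.pi fun _ => Ioo 0 (π / 2)) : 0 < ∑ i, cos (k i) :=
  Finset.sum_pos (fun i _ => cos_pos_of_mem_Ioo
    ⟨by linarith [(hk i (mem_univ i)).1, pi_pos], (hk i (mem_univ i)).2⟩) Finset.univ_nonempty

theorem sum_sin_sq_pos_of_mem_pi_Ioo {ι : Type*} [Fintype ι] [Nonempty ι] {k : ι → ℝ}
    (hk : k ∈ univ.pi fun _ => Ioo 0 (π / 2)) : 0 < ∑ i, sin (k i) ^ 2 :=
  Finset.sum_pos (fun i _ => pow_pos (sin_pos_of_pos_of_lt_pi (hk i (mem_univ i)).1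
    (by linarith [(hk i (mem_univ i)).2, pi_pos])) 2) Finset.univ_nonempty

-- `a`, `s`, `c`, `K` stand for `φ(k)`, `∑ sin² kᵢ`, `h/d²` and `d`.
section Pointwise

variable {a s c K : ℝ}

theorem one_sub_sq_pos (hK : 0 < K) (hs : 0 < s) (hsa : s / K ≤ 1 - a ^ 2) : 0 < 1 - a ^ 2 :=
  (div_pos hs hK).trans_le hsa

theorem div_le_one_sub_sq_mul_sub (hK : 0 < K) (hc : 0 ≤ c) (hs : 0 ≤ s)
    (hsa : s / K ≤ 1 - a ^ 2) : s / K ≤ 1 - a ^ 2 * (a ^ 2 - c * s) := by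
  have : 0 ≤ s / K := by positivity
  nlinarith [mul_nonneg (sq_nonneg a) (mul_nonneg hc hs), mul_nonneg (sq_nonneg a) (sq_nonneg a)]

theorem one_sub_sq_mul_sub_pos (hK : 0 < K) (hc : 0 ≤ c) (hs : 0 < s)
    (hsa : s / K ≤ 1 - a ^ 2) : 0 < 1 - a ^ 2 * (a ^ 2 - c * s) :=
  (div_pos hs hK).trans_le (div_le_one_sub_sq_mul_sub hK hc hs.le hsa)

theorem sq_div_one_sub_sq_sub_eq (hK : 0 < K) (hc : 0 ≤ c) (hs : 0 < s)
    (hsa : s / K ≤ 1 - a ^ 2) :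
    a ^ 2 / (1 - a ^ 2) - a ^ 2 * (1 + a ^ 2) / (1 - a ^ 2 * (a ^ 2 - c * s)) =
      c * (a ^ 4 * s / ((1 - a ^ 2) * (1 - a ^ 2 * (a ^ 2 - c * s)))) := by
  have h₁ := (one_sub_sq_pos hK hs hsa).ne'
  have h₂ := (one_sub_sq_mul_sub_pos hK hc hs hsa).ne'
  field_simp
  ring

theorem abs_sq_div_one_sub_sq_le (hK : 0 < K) (hs : 0 < s) (hsa : s / K ≤ 1 - a ^ 2) :
    |a ^ 2 / (1 - a ^ 2)| ≤ K * s⁻¹ := by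
  have h₁ := one_sub_sq_pos hK hs hsa
  calc |a ^ 2 / (1 - a ^ 2)| ≤ 1 / (s / K) := by
        rw [abs_of_nonneg (by positivity)]
        exact div_le_div₀ zero_le_one (by linarith) (by positivity) hsa
    _ = K * s⁻¹ := by field_simp

theorem abs_sq_mul_one_add_sq_div_le (hK : 0 < K) (hc : 0 ≤ c) (hs : 0 < s)
    (hsa : s / K ≤ 1 - a ^ 2) :
    |a ^ 2 * (1 + a ^ 2) / (1 - a ^ 2 * (a ^ 2 - c * s))| ≤ 2 * K * s⁻¹ := by
  have h₁ := one_sub_sq_pos hK hs hsa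
  have h₂ := one_sub_sq_mul_sub_pos hK hc hs hsa
  calc |a ^ 2 * (1 + a ^ 2) / (1 - a ^ 2 * (a ^ 2 - c * s))| ≤ 2 / (s / K) := by
        rw [abs_of_nonneg (by positivity)]
        exact div_le_div₀ zero_le_two (by nlinarith) (by positivity)
          (div_le_one_sub_sq_mul_sub hK hc hs.le hsa)
    _ = 2 * K * s⁻¹ := by field_simp

theorem abs_pow_four_mul_div_le (hK : 0 < K) (hc : 0 ≤ c) (hs : 0 < s)
    (hsa : s / K ≤ 1 - a ^ 2) :
    |a ^ 4 * s / ((1 - a ^ 2) * (1 - a ^ 2 * (a ^ 2 - c * s)))| ≤ K ^ 2 * s⁻¹ := by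
  have h₁ := one_sub_sq_pos hK hs hsa
  have h₂ := one_sub_sq_mul_sub_pos hK hc hs hsa
  have ha : a ^ 4 ≤ 1 := by nlinarith
  calc |a ^ 4 * s / ((1 - a ^ 2) * (1 - a ^ 2 * (a ^ 2 - c * s)))|
      ≤ 1 * s / (s / K * (s / K)) := by
        rw [abs_of_nonneg (by positivity)]
        gcongr
        exact div_le_one_sub_sq_mul_sub hK hc hs.le hsa
    _ = K ^ 2 * s⁻¹ := by field_simp

theorem pow_four_mul_div_nonneg (hK : 0 < K) (hc : 0 ≤ c) (hs : 0 ≤ s)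
    (hsa : s / K ≤ 1 - a ^ 2) : 0 ≤ a ^ 4 * s / ((1 - a ^ 2) * (1 - a ^ 2 * (a ^ 2 - c * s))) := by
  have h₀ : 0 ≤ s / K := by positivity
  have h₂ := div_le_one_sub_sq_mul_sub hK hc hs hsa
  exact div_nonneg (by positivity) (mul_nonneg (h₀.trans hsa) (h₀.trans h₂))

theorem pow_four_mul_div_pos (ha : a ≠ 0) (hK : 0 < K) (hc : 0 ≤ c) (hs : 0 < s)
    (hsa : s / K ≤ 1 - a ^ 2) : 0 < a ^ 4 * s / ((1 - a ^ 2) * (1 - a ^ 2 * (a ^ 2 - c * s))) := by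
  have h₁ := one_sub_sq_pos hK hs hsa
  have h₂ := one_sub_sq_mul_sub_pos hK hc hs hsa
  positivity

end Pointwise

section Integrals

variable {α : Type*} [MeasurableSpace α] {μ : Measure α} {a s : α → ℝ} {c K : ℝ}

theorem integrable_pow_four_mul_div (ha : Measurable a) (hs : Measurable s) (hK : 0 < K)
    (hc : 0 ≤ c) (hsa : ∀ x, s x / K ≤ 1 - a x ^ 2) (hpos : ∀ᵐ x ∂μ, 0 < s x)
    (hinv : Integrable (fun x => (s x)⁻¹) μ) :
    Integrable
      (fun x => a x ^ 4 * s x / ((1 - a x ^ 2) * (1 - a x ^ 2 * (a x ^ 2 - c * s x)))) μ :=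
  (hinv.const_mul (K ^ 2)).mono' (by fun_prop : Measurable _).aestronglyMeasurable <| by
    filter_upwards [hpos] with x hx using abs_pow_four_mul_div_le hK hc hx (hsa x)

theorem integral_sq_div_one_sub_sq_sub_integral (ha : Measurable a) (hs : Measurable s)
    (hK : 0 < K) (hc : 0 ≤ c) (hsa : ∀ x, s x / K ≤ 1 - a x ^ 2) (hpos : ∀ᵐ x ∂μ, 0 < s x)
    (hinv : Integrable (fun x => (s x)⁻¹) μ) :
    ∫ x, a x ^ 2 / (1 - a x ^ 2) ∂μ -
        ∫ x, a x ^ 2 * (1 + a x ^ 2) / (1 - a x ^ 2 * (a x ^ 2 - c * s x)) ∂μ =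
      c * ∫ x, a x ^ 4 * s x / ((1 - a x ^ 2) * (1 - a x ^ 2 * (a x ^ 2 - c * s x))) ∂μ := by
  have hF : Integrable (fun x => a x ^ 2 / (1 - a x ^ 2)) μ :=
    (hinv.const_mul K).mono' (by fun_prop : Measurable _).aestronglyMeasurable <| by
      filter_upwards [hpos] with x hx using abs_sq_div_one_sub_sq_le hK hx (hsa x)
  have hG : Integrable
      (fun x => a x ^ 2 * (1 + a x ^ 2) / (1 - a x ^ 2 * (a x ^ 2 - c * s x))) μ :=
    (hinv.const_mul (2 * K)).mono' (by fun_prop : Measurable _).aestronglyMeasurable <| by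
      filter_upwards [hpos] with x hx using abs_sq_mul_one_add_sq_div_le hK hc hx (hsa x)
  rw [← integral_sub hF hG, ← integral_const_mul]
  refine integral_congr_ae ?_
  filter_upwards [hpos] with x hx using sq_div_one_sub_sq_sub_eq hK hc hx (hsa x)

theorem setIntegral_pos_of_forall_mem_pos {f : α → ℝ} {S U : Set α} (hf : IntegrableOn f S μ)
    (hnn : 0 ≤ᵐ[μ.restrict S] f) (hUS : U ⊆ S) (hU : μ U ≠ 0) (hfU : ∀ x ∈ U, 0 < f x) :
    0 < ∫ x in S, f x ∂μ := by
  rw [setIntegral_pos_iff_support_of_nonneg_ae hnn hf]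
  exact (pos_iff_ne_zero.2 hU).trans_le <|
    measure_mono fun x hx => ⟨(hfU x hx).ne', hUS hx⟩

end Integrals

/-- With `φ(k) = (1/d) ∑ cos k_i` and `ψ_h(k) = φ(k)² - (h/d²) ∑ sin² k_i`,
the difference of Green functions
`G^{X-Y} - G_{h,odd} = (h/((2π)^d d²)) ∫ φ⁴ (∑ sin² k_i)/((1-φ²)(1-φ²ψ_h))`,
which is strictly positive for `d ≥ 4` and `h > 0`. -/
theorem green_difference_eq_and_pos (d : ℕ) (hd : 4 ≤ d) (h : ℝ) (hh : 0 < h) :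
    let box : Set (Fin d → ℝ) := Set.univ.pi fun _ => Set.Icc (-Real.pi) Real.pi
    let φ : (Fin d → ℝ) → ℝ := fun k => (1 / d) * ∑ i, Real.cos (k i)
    let ψ : (Fin d → ℝ) → ℝ :=
      fun k => (φ k) ^ 2 - (h / (d : ℝ) ^ 2) * ∑ i, Real.sin (k i) ^ 2
    ((2 * Real.pi) ^ (-(d : ℝ)) * ∫ k in box, (φ k) ^ 2 / (1 - (φ k) ^ 2)) -
        (2 * Real.pi) ^ (-(d : ℝ)) *
          ∫ k in box, (φ k) ^ 2 * (1 + (φ k) ^ 2) / (1 - (φ k) ^ 2 * ψ k)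
      = (h / ((2 * Real.pi) ^ (d : ℕ) * (d : ℝ) ^ 2)) *
          ∫ k in box, (φ k) ^ 4 * (∑ i, Real.sin (k i) ^ 2) /
            ((1 - (φ k) ^ 2) * (1 - (φ k) ^ 2 * ψ k)) ∧
    0 < (h / ((2 * Real.pi) ^ (d : ℕ) * (d : ℝ) ^ 2)) *
          ∫ k in box, (φ k) ^ 4 * (∑ i, Real.sin (k i) ^ 2) /
            ((1 - (φ k) ^ 2) * (1 - (φ k) ^ 2 * ψ k)) := by
  intro box φ ψ
  have : NeZero d := ⟨by omega⟩
  have hd₀ : (0 : ℝ) < d := by positivity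
  have hc : 0 ≤ h / (d : ℝ) ^ 2 := by positivity
  have hφ : Measurable φ := by fun_prop
  have hsa := sum_sin_sq_div_le_one_sub_sq d
  have hinv : IntegrableOn (fun k : Fin d → ℝ => (∑ i, sin (k i) ^ 2)⁻¹) box :=
    integrableOn_inv_sum_sin_sq (by simp; omega)
  have hS : Measurable fun k : Fin d → ℝ => ∑ i, sin (k i) ^ 2 := by fun_prop
  have hpos := ae_restrict_of_ae (μ := volume) (s := box) ae_sum_sin_sq_pos
  have hQ := integrable_pow_four_mul_div hφ hS hd₀ hc hsa hpos hinv
  have hQpos := setIntegral_pos_of_forall_mem_pos hQ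
    (ae_of_all _ fun k => pow_four_mul_div_nonneg hd₀ hc (by positivity) (hsa k))
    (pi_mono fun _ _ => Ioo_subset_Icc_self.trans
      (Icc_subset_Icc (by linarith [pi_pos]) (by linarith [pi_pos])))
    (by simp [volume_pi_pi, pi_pos]) fun k hk =>
      pow_four_mul_div_pos (mul_pos (by positivity) (sum_cos_pos_of_mem_pi_Ioo hk)).ne' hd₀ hc
        (sum_sin_sq_pos_of_mem_pi_Ioo hk) (hsa k)
  refine ⟨?_, by positivity⟩
  rw [← mul_sub, integral_sq_div_one_sub_sq_sub_integral hφ hS hd₀ hc hsa hpos hinv,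
    rpow_neg (by positivity), rpow_natCast]
  ring
end

section
/- Let γ ∈ (0,1), d ∈ (0, 1/2), and set f₂⁻¹-moment M(h) = 1 - 1/d' + ((1+h)^{-γ/(1-γ)} + (1-h)^{-γ/(1-γ)})/(2d') where d' = d. Then there exists h₀ > 0 such that for all 0 < h < h₀, M(h) ≤ exp(γh²/(d'(1-γ)²)). -/
/-!
With `α = γ/(1-γ)`, the function `g(x) = (1+x)^(-α) + (1-x)^(-α)` satisfies `g(0) = 2`,
`g'(0) = 0` and `g''(0) = 2α(α+1) = 2γ/(1-γ)²`. Comparing derivatives near `0` gives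
`g(h) ≤ 2 + 2α(α+1)h²` for small `h > 0` (twice the Taylor term leaves room for the error),
hence `M(h) ≤ 1 + γh²/(d(1-γ)²) ≤ exp(γh²/(d(1-γ)²))`.
-/

open Set Filter Topology

lemma hasDerivAt_one_add_rpow_add_one_sub_rpow (p : ℝ) {x : ℝ} (hx : x ∈ Ioo (-1 : ℝ) 1) :
    HasDerivAt (fun y => (1 + y) ^ p + (1 - y) ^ p)
      (p * ((1 + x) ^ (p - 1) - (1 - x) ^ (p - 1))) x := by
  have h₁ := ((hasDerivAt_id' x).const_add 1).rpow_const (p := p) (Or.inl (by linarith [hx.1]))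
  have h₂ := ((hasDerivAt_id' x).const_sub 1).rpow_const (p := p) (Or.inl (by linarith [hx.2]))
  exact (h₁.add h₂).congr_deriv (by ring)

lemma hasDerivAt_one_add_rpow_sub_one_sub_rpow_zero (q : ℝ) :
    HasDerivAt (fun y => (1 + y) ^ q - (1 - y) ^ q) (2 * q) 0 := by
  have h₁ := ((hasDerivAt_id' (0 : ℝ)).const_add 1).rpow_const (p := q) (Or.inl (by norm_num))
  have h₂ := ((hasDerivAt_id' (0 : ℝ)).const_sub 1).rpow_const (p := q) (Or.inl (by norm_num))
  exact (h₁.sub h₂).congr_deriv (by norm_num; ring)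

lemma eventually_nhdsGT_le_add_mul_sub {f : ℝ → ℝ} {f' c a : ℝ} (hf : HasDerivAt f f' a)
    (hc : f' < c) : ∀ᶠ x in 𝓝[>] a, f x ≤ f a + c * (x - a) := by
  filter_upwards [hf.hasDerivWithinAt.limsup_slope_le' (lt_irrefl a) hc, self_mem_nhdsWithin]
    with x hslope hx
  rw [slope_def_field, div_lt_iff₀ (sub_pos.2 hx)] at hslope
  linarith

lemma eventually_nhdsGT_le_of_deriv_nonpos {f f' : ℝ → ℝ} {a : ℝ}
    (hf : ∀ᶠ x in 𝓝 a, HasDerivAt f (f' x) x) (hf' : ∀ᶠ x in 𝓝[>] a, f' x ≤ 0) :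
    ∀ᶠ x in 𝓝[>] a, f x ≤ f a := by
  obtain ⟨u, hau, hu⟩ :=
    mem_nhdsGT_iff_exists_Ioo_subset.1 ((hf.filter_mono nhdsWithin_le_nhds).and hf')
  filter_upwards [Ioo_mem_nhdsGT hau] with x hx
  have hcont : ContinuousOn f (Icc a x) := by
    intro y hy
    rcases hy.1.eq_or_lt with rfl | hay
    · exact hf.self_of_nhds.continuousAt.continuousWithinAt
    · exact (hu ⟨hay, hy.2.trans_lt hx.2⟩).1.continuousAt.continuousWithinAt
  have hanti : AntitoneOn f (Icc a x) := by
    refine antitoneOn_of_hasDerivWithinAt_nonpos (convex_Icc a x) hcont (f' := f') ?_ ?_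
    all_goals
      rw [interior_Icc]
      intro y hy
      have hy' := hu ⟨hy.1, hy.2.trans hx.2⟩
    · exact hy'.1.hasDerivWithinAt
    · exact hy'.2
  exact hanti (left_mem_Icc.2 hx.1.le) (right_mem_Icc.2 hx.1.le) hx.1.le

lemma eventually_nhdsGT_one_add_rpow_add_one_sub_rpow_le {p c : ℝ} (hc : p * (p - 1) < c) :
    ∀ᶠ x in 𝓝[>] 0, (1 + x) ^ p + (1 - x) ^ p ≤ 2 + c * x ^ 2 := by
  have hderiv : ∀ᶠ x in 𝓝 (0 : ℝ),
      HasDerivAt (fun y => (1 + y) ^ p + (1 - y) ^ p - c * y ^ 2)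
        (p * ((1 + x) ^ (p - 1) - (1 - x) ^ (p - 1)) - 2 * c * x) x := by
    filter_upwards [Ioo_mem_nhds (by norm_num : (-1 : ℝ) < 0) one_pos] with x hx
    exact ((hasDerivAt_one_add_rpow_add_one_sub_rpow p hx).sub
      ((hasDerivAt_pow 2 x).const_mul c)).congr_deriv (by ring)
  -- the derivative `p((1+x)^(p-1) - (1-x)^(p-1))` vanishes at `0` with slope `2p(p-1) < 2c`
  have hslope : ∀ᶠ x in 𝓝[>] (0 : ℝ),
      p * ((1 + x) ^ (p - 1) - (1 - x) ^ (p - 1)) ≤ 2 * c * x := by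
    simpa using eventually_nhdsGT_le_add_mul_sub
      ((hasDerivAt_one_add_rpow_sub_one_sub_rpow_zero (p - 1)).const_mul p) (c := 2 * c)
      (by linarith)
  filter_upwards [eventually_nhdsGT_le_of_deriv_nonpos hderiv
    (hslope.mono fun x hx => sub_nonpos.2 hx)] with x hx
  norm_num at hx
  linarith

theorem tilted_density_moment_bound_general (γ d : ℝ) (hγ0 : 0 < γ) (hγ1 : γ < 1)
    (hd0 : 0 < d) :
    ∃ h₀ > 0, ∀ h : ℝ, 0 < h → h < h₀ →
      1 - 1 / d +
          ((1 + h) ^ (-(γ / (1 - γ))) + (1 - h) ^ (-(γ / (1 - γ)))) / (2 * d)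
        ≤ Real.exp (γ * h ^ 2 / (d * (1 - γ) ^ 2)) := by
  set α := γ / (1 - γ)
  have hα : 0 < α := div_pos hγ0 (sub_pos.2 hγ1)
  have hαα : α * (α + 1) = γ / (1 - γ) ^ 2 := by
    simp only [α]
    field_simp [(sub_pos.2 hγ1).ne']
    ring
  have hkey := eventually_nhdsGT_one_add_rpow_add_one_sub_rpow_le (p := -α)
    (c := 2 * (α * (α + 1))) (by nlinarith)
  obtain ⟨h₀, hh₀, hsub⟩ := mem_nhdsGT_iff_exists_Ioo_subset.1 hkey
  refine ⟨h₀, hh₀, fun h hh hh' => ?_⟩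
  calc 1 - 1 / d + ((1 + h) ^ (-α) + (1 - h) ^ (-α)) / (2 * d)
      ≤ 1 - 1 / d + (2 + 2 * (α * (α + 1)) * h ^ 2) / (2 * d) := by
        gcongr 1 - 1 / d + ?_ / (2 * d)
        exact hsub ⟨hh, hh'⟩
    _ = 1 + γ * h ^ 2 / (d * (1 - γ) ^ 2) := by
        rw [hαα]
        field_simp
        ring
    _ ≤ Real.exp (γ * h ^ 2 / (d * (1 - γ) ^ 2)) := by
        linarith [Real.add_one_le_exp (γ * h ^ 2 / (d * (1 - γ) ^ 2))]

/-- Key estimate for the two-step Radon–Nikodym density of the tilted walk: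
for `γ ∈ (0,1)` and `d ∈ (0, 1/2)`, setting
`M(h) = 1 - 1/d + ((1+h)^{-γ/(1-γ)} + (1-h)^{-γ/(1-γ)})/(2d)`, there is
`h₀ > 0` such that `M(h) ≤ exp(γ h² / (d (1-γ)²))` for all `0 < h < h₀`. -/
theorem tilted_density_moment_bound (γ d : ℝ) (hγ0 : 0 < γ) (hγ1 : γ < 1)
    (hd0 : 0 < d) (hd1 : d < 1 / 2) :
    ∃ h₀ > 0, ∀ h : ℝ, 0 < h → h < h₀ →
      1 - 1 / d +
          ((1 + h) ^ (-(γ / (1 - γ))) + (1 - h) ^ (-(γ / (1 - γ)))) / (2 * d)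
        ≤ Real.exp (γ * h ^ 2 / (d * (1 - γ) ^ 2)) :=
  tilted_density_moment_bound_general γ d hγ0 hγ1 hd0
end

section
/- Let X be a continuous-time simple random walk on ℤ^d with jump rate 1 and let p_t(x) = P(X_t = x). Then there is a constant C > 0 such that p_t(x) ≥ C (1+t)^{-d/2} (2d)^{-‖x‖₁} for all t > 0 and all x ∈ ℤ^d with ‖x‖₁ ≤ t/2. -/
/-- The `j`-th of the `2d` unit steps on `ℤ^d`. -/
def srwStep (d : ℕ) (j : Fin (2 * d)) : Fin d → ℤ :=
  fun i => if j.val < d then (if j.val = i.val then 1 else 0)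
    else (if j.val = d + i.val then -1 else 0)

/-- `n`-step transition probability of discrete-time simple random walk on `ℤ^d`. -/
noncomputable def nstepProb (d n : ℕ) (x : Fin d → ℤ) : ℝ :=
  ((Finset.univ : Finset (Fin n → Fin (2 * d))).filter
      (fun s => (∑ i, srwStep d (s i)) = x)).card / (2 * d : ℝ) ^ n

/-- Transition kernel `p_t(x)` of the rate-1 continuous-time simple random walk
on `ℤ^d`, as a Poisson mixture of the discrete-time kernels. -/
noncomputable def ctKernel (d : ℕ) (t : ℝ) (x : Fin d → ℤ) : ℝ :=
  ∑' n : ℕ, Real.exp (-t) * t ^ n / (n.factorial : ℝ) * nstepProb d n x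

/-!
Write `m = ‖x‖₁`. Going straight to `x` in `m` steps and then making a closed excursion of `2k`
steps gives `p_{m+2k}(x) ≥ (2d)^{-m} p_{2k}(0)`. Since `E |S_k|² = k`, Markov's inequality keeps
the walk in the cube `[-√(2k), √(2k)]^d` with probability at least `1/2`, and Cauchy–Schwarz on
that cube gives `p_{2k}(0) = ∑_y p_k(y)² ≥ 1 / (4 · #cube) ≳ k^{-d/2}`. For `t ≥ 16`, Stirling
bounds the Poisson weights `e^{-t} tⁿ / n!` below by `e^{-8}/√t` for the `√t` values
`n = m + 2k ∈ [t, t + 2√t + 2]`, whose contributions add up to order `t^{-d/2} (2d)^{-m}`;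
for `t ≤ 16` the single term `n = m` suffices.
-/

open Finset Real

namespace SRW

variable {d : ℕ}

/-- `stepEquiv d (.inl i)` is the step `+eᵢ` and `stepEquiv d (.inr i)` the step `-eᵢ`. -/
def stepEquiv (d : ℕ) : Fin d ⊕ Fin d ≃ Fin (2 * d) :=
  finSumFinEquiv.trans (finCongr (two_mul d).symm)

@[simp]
lemma srwStep_stepEquiv_inl (i : Fin d) : srwStep d (stepEquiv d (.inl i)) = Pi.single i 1 := by
  funext c
  simp [stepEquiv, srwStep, Pi.single_apply, Fin.ext_iff, eq_comm]

@[simp]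
lemma srwStep_stepEquiv_inr (i : Fin d) : srwStep d (stepEquiv d (.inr i)) = Pi.single i (-1) := by
  funext c
  simp [stepEquiv, srwStep, Pi.single_apply, Fin.ext_iff, add_comm d, eq_comm]

lemma sum_srwStep_apply (c : Fin d) : ∑ j, srwStep d j c = 0 := by
  rw [← (stepEquiv d).sum_comp, Fintype.sum_sum_type]
  simp [Pi.single_apply]

lemma sum_srwStep_apply_sq (j : Fin (2 * d)) : ∑ c, srwStep d j c ^ 2 = 1 := by
  obtain ⟨i | i, rfl⟩ := (stepEquiv d).surjective j <;> simp [Pi.single_apply]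

lemma exists_srwStep_eq_single_sign (i : Fin d) {a : ℤ} (ha : a ≠ 0) :
    ∃ j, srwStep d j = Pi.single i a.sign := by
  rcases ha.lt_or_gt with ha | ha
  · exact ⟨stepEquiv d (.inr i), by simp [Int.sign_eq_neg_one_of_neg ha]⟩
  · exact ⟨stepEquiv d (.inl i), by simp [Int.sign_eq_one_of_pos ha]⟩

def negStep (d : ℕ) : Equiv.Perm (Fin (2 * d)) :=
  (stepEquiv d).symm.trans ((Equiv.sumComm _ _).trans (stepEquiv d))

lemma srwStep_negStep (j : Fin (2 * d)) : srwStep d (negStep d j) = -srwStep d j := by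
  obtain ⟨i | i, rfl⟩ := (stepEquiv d).surjective j <;> simp [negStep, Pi.single_neg]

def endpoint {n : ℕ} (s : Fin n → Fin (2 * d)) : Fin d → ℤ :=
  ∑ i, srwStep d (s i)

def pathCount (d n : ℕ) (x : Fin d → ℤ) : ℕ :=
  #{s : Fin n → Fin (2 * d) | endpoint s = x}

lemma nstepProb_eq_pathCount (n : ℕ) (x : Fin d → ℤ) :
    nstepProb d n x = pathCount d n x / (2 * d : ℝ) ^ n :=
  rfl

lemma nstepProb_nonneg (n : ℕ) (x : Fin d → ℤ) : 0 ≤ nstepProb d n x := by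
  rw [nstepProb_eq_pathCount]
  positivity

lemma nstepProb_le_one (n : ℕ) (x : Fin d → ℤ) : nstepProb d n x ≤ 1 := by
  rw [nstepProb_eq_pathCount]
  refine div_le_one_of_le₀ ?_ (by positivity)
  exact_mod_cast (card_filter_le _ _).trans_eq (by simp)

lemma endpoint_append {a b : ℕ} (s : Fin a → Fin (2 * d)) (u : Fin b → Fin (2 * d)) :
    endpoint (Fin.append s u) = endpoint s + endpoint u := by
  simp [endpoint, Fin.sum_univ_add]

lemma endpoint_negStep {n : ℕ} (s : Fin n → Fin (2 * d)) :
    endpoint (negStep d ∘ s) = -endpoint s := by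
  simp [endpoint, srwStep_negStep]

lemma sum_pathCount_mul_le (a b : ℕ) (z : Fin d → ℤ) (S : Finset (Fin d → ℤ)) :
    ∑ y ∈ S, pathCount d a y * pathCount d b (z - y) ≤ pathCount d (a + b) z := by
  classical
  calc ∑ y ∈ S, pathCount d a y * pathCount d b (z - y)
      = #{p : (Fin a → Fin (2 * d)) × (Fin b → Fin (2 * d)) |
          endpoint p.1 ∈ S ∧ endpoint p.1 + endpoint p.2 = z} := by
        rw [card_eq_sum_card_fiberwise (f := fun p => endpoint p.1) (t := S)
          (fun p hp => (mem_filter.1 hp).2.1)]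
        refine sum_congr rfl fun y hy => ?_
        rw [pathCount, pathCount, ← card_product]
        congr 1
        ext ⟨s, u⟩
        simp only [mem_filter, mem_univ, true_and, mem_product]
        constructor
        · rintro ⟨rfl, h⟩
          exact ⟨⟨hy, add_eq_of_eq_sub' h⟩, rfl⟩
        · rintro ⟨⟨-, h⟩, rfl⟩
          exact ⟨rfl, eq_sub_of_add_eq' h⟩
    _ ≤ #{p : (Fin a → Fin (2 * d)) × (Fin b → Fin (2 * d)) |
          endpoint p.1 + endpoint p.2 = z} :=
        card_le_card (monotone_filter_right _ fun _ _ h => h.2)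
    _ = pathCount d (a + b) z :=
        card_equiv (Fin.appendEquiv a b) fun p => by
          simp only [mem_filter, mem_univ, true_and]
          change _ ↔ endpoint (Fin.append p.1 p.2) = z
          rw [endpoint_append]

lemma pathCount_neg (n : ℕ) (x : Fin d → ℤ) : pathCount d n (-x) = pathCount d n x :=
  card_equiv ((Equiv.refl _).arrowCongr (negStep d)) fun s => by
    simp only [mem_filter, mem_univ, true_and]
    change _ ↔ endpoint (negStep d ∘ s) = x
    rw [endpoint_negStep, neg_eq_iff_eq_neg]

lemma sum_nstepProb_mul_le (a b : ℕ) (z : Fin d → ℤ) (S : Finset (Fin d → ℤ)) :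
    ∑ y ∈ S, nstepProb d a y * nstepProb d b (z - y) ≤ nstepProb d (a + b) z := by
  simp only [nstepProb_eq_pathCount, div_mul_div_comm, ← sum_div, pow_add]
  gcongr
  exact_mod_cast sum_pathCount_mul_le a b z S

lemma nstepProb_mul_le_add (a b : ℕ) (x y : Fin d → ℤ) :
    nstepProb d a x * nstepProb d b y ≤ nstepProb d (a + b) (x + y) := by
  simpa using sum_nstepProb_mul_le a b (x + y) {x}

lemma nstepProb_neg (n : ℕ) (x : Fin d → ℤ) : nstepProb d n (-x) = nstepProb d n x := by
  rw [nstepProb_eq_pathCount, nstepProb_eq_pathCount, pathCount_neg]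

lemma nstepProb_zero_zero : nstepProb d 0 0 = 1 := by
  simp [nstepProb_eq_pathCount, pathCount, endpoint]

lemma inv_le_nstepProb_one_srwStep (j : Fin (2 * d)) :
    (2 * d : ℝ)⁻¹ ≤ nstepProb d 1 (srwStep d j) := by
  have : 1 ≤ pathCount d 1 (srwStep d j) :=
    card_pos.2 ⟨fun _ => j, by simp [endpoint]⟩
  rw [nstepProb_eq_pathCount, pow_one, inv_eq_one_div]
  gcongr
  exact_mod_cast this

lemma sum_abs_sub_single_sign (x : Fin d → ℤ) {i : Fin d} (hi : x i ≠ 0) :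
    ∑ c, |(x - Pi.single i (x i).sign : Fin d → ℤ) c| = ∑ c, |x c| - 1 := by
  have hpoint : ∀ c, |(x - Pi.single i (x i).sign : Fin d → ℤ) c|
      = |x c| - (Pi.single i 1 : Fin d → ℤ) c := by
    intro c
    rcases eq_or_ne c i with rfl | hc
    · rcases hi.lt_or_gt with h | h
      · simp [Int.sign_eq_neg_one_of_neg h, abs_of_neg h, abs_of_nonpos (by omega : x c + 1 ≤ 0)]
        ring
      · simp [Int.sign_eq_one_of_pos h, abs_of_pos h, abs_of_nonneg (by omega : 0 ≤ x c - 1)]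
    · simp [hc]
  rw [sum_congr rfl fun c _ => hpoint c, sum_sub_distrib, Fintype.sum_pi_single']

lemma inv_pow_le_nstepProb {m : ℕ} {x : Fin d → ℤ} (hx : ∑ c, |x c| = m) :
    ((2 * d : ℝ) ^ m)⁻¹ ≤ nstepProb d m x := by
  induction m generalizing x with
  | zero =>
    obtain rfl : x = 0 := funext fun c =>
      abs_eq_zero.1 ((sum_eq_zero_iff_of_nonneg fun _ _ => abs_nonneg _).1 hx c (mem_univ c))
    simp [nstepProb_zero_zero]
  | succ m ih =>
    obtain ⟨i, hi⟩ : ∃ i, x i ≠ 0 := by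
      by_contra! h
      simp [h] at hx
      omega
    obtain ⟨j, hj⟩ := exists_srwStep_eq_single_sign (d := d) i hi
    have hrest : ∑ c, |(x - srwStep d j) c| = m := by
      rw [hj, sum_abs_sub_single_sign x hi, hx]
      push_cast
      ring
    calc ((2 * d : ℝ) ^ (m + 1))⁻¹ = (2 * d : ℝ)⁻¹ * ((2 * d : ℝ) ^ m)⁻¹ := by
          rw [pow_succ', mul_inv]
      _ ≤ nstepProb d 1 (srwStep d j) * nstepProb d m (x - srwStep d j) :=
          mul_le_mul (inv_le_nstepProb_one_srwStep j) (ih hrest) (by positivity)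
            (nstepProb_nonneg _ _)
      _ ≤ nstepProb d (m + 1) x := by
          simpa [add_comm 1 m] using nstepProb_mul_le_add 1 m (srwStep d j) (x - srwStep d j)

lemma endpoint_cons {n : ℕ} (j : Fin (2 * d)) (u : Fin n → Fin (2 * d)) :
    endpoint (Fin.cons j u : Fin (n + 1) → Fin (2 * d)) = srwStep d j + endpoint u := by
  simp [endpoint, Fin.sum_univ_succ]

lemma sum_sum_endpoint_sq (k : ℕ) :
    ∑ s : Fin k → Fin (2 * d), ∑ c, endpoint s c ^ 2 = k * (2 * d) ^ k := by
  induction k with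
  | zero => simp [endpoint]
  | succ k ih =>
    have hcross : ∑ j : Fin (2 * d), ∑ u : Fin k → Fin (2 * d), ∑ c,
        2 * srwStep d j c * endpoint u c = 0 := by
      rw [sum_comm]
      refine sum_eq_zero fun u _ => ?_
      rw [sum_comm]
      simp [← sum_mul, ← mul_sum, sum_srwStep_apply]
    rw [← (Fin.consEquiv fun _ => Fin (2 * d)).sum_comp, Fintype.sum_prod_type]
    simp only [Fin.consEquiv, Equiv.coe_fn_mk, endpoint_cons, Pi.add_apply, add_sq, sum_add_distrib,
      hcross, sum_srwStep_apply_sq, ih]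
    simp only [sum_const, card_univ, Fintype.card_pi, Fintype.card_fin, prod_const, nsmul_eq_mul]
    push_cast
    ring

noncomputable def cube (d r : ℕ) : Finset (Fin d → ℤ) :=
  Fintype.piFinset fun _ => Icc (-(r : ℤ)) r

lemma card_cube (d r : ℕ) : #(cube d r) = (2 * r + 1) ^ d := by
  simp only [cube, Fintype.card_piFinset, Int.card_Icc, prod_const, card_univ, Fintype.card_fin]
  congr 1
  omega

lemma sq_le_sum_sq_of_notMem_cube {r : ℕ} {y : Fin d → ℤ} (hy : y ∉ cube d r) :
    ((r : ℤ) + 1) ^ 2 ≤ ∑ c, y c ^ 2 := by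
  obtain ⟨c, hc⟩ : ∃ c, y c ∉ Icc (-(r : ℤ)) r := by simpa [cube] using hy
  have hrc : (r : ℤ) + 1 ≤ |y c| := by
    rw [mem_Icc, not_and_or, not_le, not_le] at hc
    rcases hc with hc | hc <;> [rw [abs_of_neg (by omega)]; rw [abs_of_pos (by omega)]] <;> omega
  calc ((r : ℤ) + 1) ^ 2 ≤ |y c| ^ 2 := by gcongr
    _ = y c ^ 2 := sq_abs _
    _ ≤ ∑ c, y c ^ 2 := single_le_sum (fun c _ => sq_nonneg (y c)) (mem_univ c)

lemma pow_le_two_mul_card_endpoint_mem_cube (k : ℕ) :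
    (2 * d) ^ k ≤ 2 * #{s : Fin k → Fin (2 * d) | endpoint s ∈ cube d (Nat.sqrt (2 * k))} := by
  set S := cube d (Nat.sqrt (2 * k))
  have htotal := card_filter_add_card_filter_not (s := (univ : Finset (Fin k → Fin (2 * d))))
    fun s => endpoint s ∈ S
  set good := #{s : Fin k → Fin (2 * d) | endpoint s ∈ S}
  set bad := #{s : Fin k → Fin (2 * d) | endpoint s ∉ S}
  have hsqrt : 2 * (k : ℤ) + 1 ≤ ((Nat.sqrt (2 * k) : ℤ) + 1) ^ 2 := by
    have := Nat.lt_succ_sqrt' (2 * k)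
    zify at this
    omega
  have hbad : (2 * (k : ℤ) + 1) * bad ≤ k * (2 * d) ^ k := by
    calc (2 * (k : ℤ) + 1) * bad
        = ∑ s : Fin k → Fin (2 * d) with endpoint s ∉ S, (2 * (k : ℤ) + 1) := by
          simp [bad, mul_comm]
      _ ≤ ∑ s : Fin k → Fin (2 * d) with endpoint s ∉ S, ∑ c, endpoint s c ^ 2 :=
          sum_le_sum fun s hs => hsqrt.trans (sq_le_sum_sq_of_notMem_cube (mem_filter.1 hs).2)
      _ ≤ ∑ s : Fin k → Fin (2 * d), ∑ c, endpoint s c ^ 2 :=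
          sum_le_sum_of_subset_of_nonneg (filter_subset _ _)
            fun s _ _ => sum_nonneg fun c _ => sq_nonneg _
      _ = k * (2 * d) ^ k := sum_sum_endpoint_sq k
  simp only [card_univ, Fintype.card_pi, Fintype.card_fin, prod_const] at htotal
  zify at htotal ⊢
  nlinarith

lemma one_half_le_sum_nstepProb_cube (hd : 0 < d) (k : ℕ) :
    1 / 2 ≤ ∑ y ∈ cube d (Nat.sqrt (2 * k)), nstepProb d k y := by
  simp only [nstepProb_eq_pathCount, ← sum_div, pathCount]
  rw [← Nat.cast_sum, sum_card_fiberwise_eq_card_filter, le_div_iff₀ (by positivity)]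
  have := (Nat.cast_le (α := ℝ)).2 (pow_le_two_mul_card_endpoint_mem_cube (d := d) k)
  push_cast at this ⊢
  linarith

lemma inv_le_nstepProb_two_mul_zero (hd : 0 < d) (k : ℕ) :
    (4 * (2 * Nat.sqrt (2 * k) + 1 : ℝ) ^ d)⁻¹ ≤ nstepProb d (2 * k) 0 := by
  set S := cube d (Nat.sqrt (2 * k))
  have hmass := one_half_le_sum_nstepProb_cube hd k
  have hsq : ∑ y ∈ S, nstepProb d k y ^ 2 ≤ nstepProb d (2 * k) 0 := by
    simpa [sq, nstepProb_neg, two_mul] using sum_nstepProb_mul_le k k 0 S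
  have hcs := sq_sum_le_card_mul_sum_sq (s := S) (f := nstepProb d k)
  rw [card_cube] at hcs
  have hP : 1 / 4 ≤ (∑ y ∈ S, nstepProb d k y) ^ 2 := by nlinarith
  have hN : (2 * Nat.sqrt (2 * k) + 1 : ℝ) ^ d * ∑ y ∈ S, nstepProb d k y ^ 2
      ≤ (2 * Nat.sqrt (2 * k) + 1 : ℝ) ^ d * nstepProb d (2 * k) 0 := by
    gcongr
  rw [inv_le_iff_one_le_mul₀ (by positivity)]
  push_cast at hcs
  linarith

lemma inv_le_nstepProb_two_mul_zero_of_le (hd : 0 < d) {t : ℝ} (ht : 1 ≤ t) {k : ℕ}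
    (hk : (k : ℝ) ≤ t) : (4 * (4 * √t) ^ d)⁻¹ ≤ nstepProb d (2 * k) 0 := by
  refine le_trans ?_ (inv_le_nstepProb_two_mul_zero hd k)
  have hsqrt : (Nat.sqrt (2 * k) : ℝ) ≤ 3 / 2 * √t :=
    Real.nat_sqrt_le_real_sqrt.trans <| Real.sqrt_le_iff.2
      ⟨by positivity, by push_cast; nlinarith [Real.sq_sqrt (by linarith : 0 ≤ t)]⟩
  have hone : 1 ≤ √t := Real.one_le_sqrt.2 ht
  gcongr
  linarith

end SRW

noncomputable def poissonWeight (t : ℝ) (n : ℕ) : ℝ :=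
  exp (-t) * t ^ n / (n.factorial : ℝ)

lemma poissonWeight_nonneg {t : ℝ} (ht : 0 ≤ t) (n : ℕ) : 0 ≤ poissonWeight t n := by
  unfold poissonWeight
  positivity

lemma exp_neg_le_poissonWeight {t : ℝ} {n : ℕ} (hn : (n : ℝ) ≤ t) :
    exp (-t) ≤ poissonWeight t n := by
  have hfac : (n.factorial : ℝ) ≤ t ^ n :=
    calc (n.factorial : ℝ) ≤ (n : ℝ) ^ n := by exact_mod_cast Nat.factorial_le_pow n
      _ ≤ t ^ n := by gcongr
  rw [poissonWeight, mul_div_assoc]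
  exact le_mul_of_one_le_right (exp_pos _).le <|
    (one_le_div (by positivity)).2 hfac

/-- Stirling's sequence `n! / (√(2n) (n/e)^n)` decreases from its value `e/√2` at `n = 1`. -/
lemma factorial_le_exp_one_mul_sqrt_mul_pow {n : ℕ} (hn : n ≠ 0) :
    (n.factorial : ℝ) ≤ exp 1 * √n * (n / exp 1) ^ n := by
  obtain ⟨m, rfl⟩ := Nat.exists_eq_succ_of_ne_zero hn
  have hseq : Stirling.stirlingSeq (m + 1) ≤ exp 1 / √2 := by
    rw [← Stirling.stirlingSeq_one]
    exact Stirling.stirlingSeq'_antitone (Nat.zero_le m)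
  have hden : 0 < √(2 * (m + 1 : ℕ)) * (((m + 1 : ℕ) : ℝ) / exp 1) ^ (m + 1) := by positivity
  rw [Stirling.stirlingSeq, div_le_iff₀ hden] at hseq
  calc ((m + 1).factorial : ℝ) ≤ exp 1 / √2 * (√(2 * (m + 1 : ℕ)) *
        (((m + 1 : ℕ) : ℝ) / exp 1) ^ (m + 1)) := hseq
    _ = exp 1 * √(m + 1 : ℕ) * (((m + 1 : ℕ) : ℝ) / exp 1) ^ (m + 1) := by
        rw [Real.sqrt_mul zero_le_two]
        field_simp

lemma exp_neg_mul_le_div_pow {t : ℝ} (ht : 0 < t) {n : ℕ} (hn : 0 < n) :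
    exp (-(n * (n / t - 1))) ≤ (t / n) ^ n := by
  have hn' : (0 : ℝ) < n := by exact_mod_cast hn
  rw [← exp_log (by positivity : 0 < (t / n) ^ n), log_pow, exp_le_exp]
  have := Real.one_sub_inv_le_log_of_pos (by positivity : 0 < t / n)
  rw [inv_div] at this
  nlinarith

lemma exp_neg_eight_div_sqrt_le_poissonWeight {t : ℝ} (ht : 16 ≤ t) {n : ℕ} (htn : t ≤ n)
    (hnt : n ≤ t + 2 * √t + 2) : exp (-8) / √t ≤ poissonWeight t n := by
  have ht0 : 0 < t := by linarith
  have hn0 : (0 : ℝ) < n := by linarith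
  have hsq : √t ^ 2 = t := Real.sq_sqrt ht0.le
  have hs4 : 4 ≤ √t := (Real.le_sqrt' (by norm_num)).2 (by linarith)
  have hdev : (n - t) ^ 2 / t ≤ 25 / 4 := by
    rw [div_le_iff₀ ht0]
    nlinarith
  have hsqrtn : √n ≤ exp (3 / 4) * √t := by
    have : √n ≤ 3 / 2 * √t := Real.sqrt_le_iff.2 ⟨by positivity, by nlinarith⟩
    nlinarith [Real.add_one_le_exp (3 / 4 : ℝ)]
  calc exp (-8) / √t = exp (-1 - 25 / 4) / (exp (3 / 4) * √t) := by
        rw [mul_comm, ← div_div, div_right_comm, ← exp_sub]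
        norm_num
    _ ≤ exp (-1 - (n - t) ^ 2 / t) / √n := by gcongr
    _ = exp (n - t - 1) * exp (-(n * (n / t - 1))) / √n := by
        rw [← exp_add]
        congr 2
        field_simp
        ring
    _ ≤ exp (n - t - 1) * (t / n) ^ n / √n := by
        gcongr
        exact exp_neg_mul_le_div_pow ht0 (by exact_mod_cast hn0)
    _ = exp (-t) * t ^ n / (exp 1 * √n * (n / exp 1) ^ n) := by
        rw [show (n : ℝ) - t - 1 = -t + n * 1 - 1 by ring, exp_sub, exp_add, exp_nat_mul]
        field_simp
        rw [← mul_pow, ← mul_pow]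
        field_simp
    _ ≤ poissonWeight t n := by
        unfold poissonWeight
        gcongr
        exact factorial_le_exp_one_mul_sqrt_mul_pow (by exact_mod_cast hn0.ne')

/-- The `k` for which `m + 2 * k` runs through the `⌊√t⌋ + 1` smallest integers `≥ t` that have
the parity of `m`: a walk can only be at distance `m` from the origin at such times. -/
noncomputable def parityWindow (t : ℝ) (m : ℕ) : Finset ℕ :=
  Icc ⌈(t - m) / 2⌉₊ (⌈(t - m) / 2⌉₊ + ⌊√t⌋₊)

lemma bounds_of_mem_parityWindow {t : ℝ} {m k : ℕ} (hm : (m : ℝ) ≤ t)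
    (hk : k ∈ parityWindow t m) : t ≤ m + 2 * k ∧ (m + 2 * k : ℝ) ≤ t + 2 * √t + 2 := by
  obtain ⟨hlow, hhigh⟩ := mem_Icc.1 hk
  have hceil := Nat.ceil_lt_add_one (by linarith : 0 ≤ (t - m) / 2)
  have hfloor := Nat.floor_le (Real.sqrt_nonneg t)
  have hlow' := (Nat.le_ceil ((t - m) / 2)).trans (Nat.cast_le.2 hlow)
  have hhigh' : (k : ℝ) ≤ ⌈(t - m) / 2⌉₊ + ⌊√t⌋₊ := by exact_mod_cast hhigh
  constructor <;> linarith

lemma sqrt_le_card_parityWindow (t : ℝ) (m : ℕ) : √t ≤ #(parityWindow t m) := by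
  rw [parityWindow, Nat.card_Icc, add_assoc, Nat.add_sub_cancel_left]
  push_cast
  exact (Nat.lt_floor_add_one _).le

lemma exp_neg_eight_le_sum_poissonWeight {t : ℝ} (ht : 16 ≤ t) {m : ℕ} (hm : (m : ℝ) ≤ t) :
    exp (-8) ≤ ∑ k ∈ parityWindow t m, poissonWeight t (m + 2 * k) := by
  have hsqrt : 0 < √t := Real.sqrt_pos.2 (by linarith)
  calc exp (-8) = √t * (exp (-8) / √t) := by field_simp
    _ ≤ #(parityWindow t m) * (exp (-8) / √t) := by
        gcongr
        exact sqrt_le_card_parityWindow t m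
    _ = ∑ k ∈ parityWindow t m, exp (-8) / √t := by simp
    _ ≤ ∑ k ∈ parityWindow t m, poissonWeight t (m + 2 * k) := by
        refine sum_le_sum fun k hk => ?_
        obtain ⟨hlow, hhigh⟩ := bounds_of_mem_parityWindow hm hk
        exact exp_neg_eight_div_sqrt_le_poissonWeight ht (by exact_mod_cast hlow)
          (by exact_mod_cast hhigh)

open SRW

lemma summable_poissonWeight_mul_nstepProb {d : ℕ} {t : ℝ} (ht : 0 ≤ t) (x : Fin d → ℤ) :
    Summable fun n => poissonWeight t n * nstepProb d n x :=
  ((Real.summable_pow_div_factorial t).mul_left (exp (-t))).of_nonneg_of_le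
    (fun n => mul_nonneg (poissonWeight_nonneg ht n) (nstepProb_nonneg n x))
    fun n => by
      rw [← mul_div_assoc]
      exact mul_le_of_le_one_right (poissonWeight_nonneg ht n) (nstepProb_le_one n x)

lemma sum_le_ctKernel {d : ℕ} {t : ℝ} (ht : 0 ≤ t) (x : Fin d → ℤ) (F : Finset ℕ) :
    ∑ n ∈ F, poissonWeight t n * nstepProb d n x ≤ ctKernel d t x :=
  (summable_poissonWeight_mul_nstepProb ht x).sum_le_tsum F
    fun n _ => mul_nonneg (poissonWeight_nonneg ht n) (nstepProb_nonneg n x)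

lemma exp_neg_mul_inv_pow_le_ctKernel {d : ℕ} {t : ℝ} (ht : 0 ≤ t) {x : Fin d → ℤ} {m : ℕ}
    (hx : ∑ c, |x c| = m) (hm : (m : ℝ) ≤ t) :
    exp (-t) * ((2 * d : ℝ) ^ m)⁻¹ ≤ ctKernel d t x :=
  calc exp (-t) * ((2 * d : ℝ) ^ m)⁻¹ ≤ poissonWeight t m * nstepProb d m x :=
        mul_le_mul (exp_neg_le_poissonWeight hm) (inv_pow_le_nstepProb hx) (by positivity)
          (poissonWeight_nonneg ht m)
    _ ≤ ctKernel d t x := by simpa using sum_le_ctKernel ht x {m}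

lemma exp_neg_eight_div_mul_inv_pow_le_ctKernel {d : ℕ} (hd : 0 < d) {t : ℝ} (ht : 16 ≤ t)
    {x : Fin d → ℤ} {m : ℕ} (hx : ∑ c, |x c| = m) (hm : (m : ℝ) ≤ t) :
    exp (-8) / (4 * (4 * √t) ^ d) * ((2 * d : ℝ) ^ m)⁻¹ ≤ ctKernel d t x := by
  set q := (4 * (4 * √t) ^ d)⁻¹ * ((2 * d : ℝ) ^ m)⁻¹
  have hterm : ∀ k ∈ parityWindow t m, q ≤ nstepProb d (m + 2 * k) x := by
    intro k hk
    have hkt : (k : ℝ) ≤ t := by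
      have := (bounds_of_mem_parityWindow hm hk).2
      nlinarith [Real.sq_sqrt (by linarith : 0 ≤ t), Real.sqrt_nonneg t]
    calc q ≤ nstepProb d (2 * k) 0 * nstepProb d m x :=
          mul_le_mul (inv_le_nstepProb_two_mul_zero_of_le hd (by linarith) hkt)
            (inv_pow_le_nstepProb hx) (by positivity) (nstepProb_nonneg _ _)
      _ ≤ nstepProb d (m + 2 * k) x := by
          simpa [add_comm] using nstepProb_mul_le_add (2 * k) m 0 x
  calc exp (-8) / (4 * (4 * √t) ^ d) * ((2 * d : ℝ) ^ m)⁻¹ = q * exp (-8) := by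
        simp only [q]
        ring
    _ ≤ q * ∑ k ∈ parityWindow t m, poissonWeight t (m + 2 * k) := by
        gcongr
        exact exp_neg_eight_le_sum_poissonWeight ht hm
    _ ≤ ∑ k ∈ parityWindow t m, poissonWeight t (m + 2 * k) * nstepProb d (m + 2 * k) x := by
        rw [mul_sum]
        refine sum_le_sum fun k hk => ?_
        rw [mul_comm]
        exact mul_le_mul_of_nonneg_left (hterm k hk) (poissonWeight_nonneg (by linarith) _)
    _ = ∑ n ∈ (parityWindow t m).image (m + 2 * ·), poissonWeight t n * nstepProb d n x := by
        rw [sum_image fun a _ b _ h => by simpa using h]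
    _ ≤ ctKernel d t x := sum_le_ctKernel (by linarith) x _

lemma rpow_neg_natCast_div_two {x : ℝ} (hx : 0 ≤ x) (n : ℕ) :
    x ^ (-(n : ℝ) / 2) = (√x ^ n)⁻¹ := by
  rw [neg_div, rpow_neg hx, Real.sqrt_eq_rpow, ← rpow_natCast, ← rpow_mul hx]
  ring_nf

/-- There is `C > 0` with `p_t(x) ≥ C (1+t)^{-d/2} (2d)^{-‖x‖₁}` for all `t > 0`
and all `x ∈ ℤ^d` with `‖x‖₁ ≤ t/2`. -/
theorem ctKernel_lower_bound (d : ℕ) (hd : 1 ≤ d) :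
    ∃ C > 0, ∀ t : ℝ, 0 < t → ∀ x : Fin d → ℤ,
      ((∑ i, |x i| : ℤ) : ℝ) ≤ t / 2 →
      C * (1 + t) ^ (-(d : ℝ) / 2) * (2 * d : ℝ) ^ (-((∑ i, |x i| : ℤ) : ℝ))
        ≤ ctKernel d t x := by
  refine ⟨exp (-16) / (4 * 4 ^ d), by positivity, fun t ht x hx => ?_⟩
  obtain ⟨m, hm⟩ := Int.eq_ofNat_of_zero_le (sum_nonneg fun c _ => abs_nonneg (x c))
  rw [hm, Int.cast_natCast] at hx ⊢
  rw [rpow_neg_natCast_div_two (by linarith), rpow_neg (by positivity), rpow_natCast]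
  have hmt : (m : ℝ) ≤ t := by linarith [m.cast_nonneg (α := ℝ)]
  rcases le_total t 16 with hsmall | hlarge
  · refine le_trans ?_ (exp_neg_mul_inv_pow_le_ctKernel ht.le hm hmt)
    gcongr
    have hsqrt : 1 ≤ √(1 + t) ^ d := one_le_pow₀ (Real.one_le_sqrt.2 (by linarith))
    have h4 : (1 : ℝ) ≤ 4 * 4 ^ d :=
      one_le_mul_of_one_le_of_one_le (by norm_num) (one_le_pow₀ (by norm_num))
    calc exp (-16) / (4 * 4 ^ d) * (√(1 + t) ^ d)⁻¹
          = exp (-16) / (4 * 4 ^ d * √(1 + t) ^ d) := by rw [← div_eq_mul_inv, div_div]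
      _ ≤ exp (-16) := div_le_self (exp_pos _).le (one_le_mul_of_one_le_of_one_le h4 hsqrt)
      _ ≤ exp (-t) := exp_le_exp.2 (by linarith)
  · refine le_trans ?_ (exp_neg_eight_div_mul_inv_pow_le_ctKernel hd hlarge hm hmt)
    gcongr
    calc exp (-16) / (4 * 4 ^ d) * (√(1 + t) ^ d)⁻¹
          = exp (-16) / (4 * (4 * √(1 + t)) ^ d) := by
          rw [mul_pow]
          field_simp
      _ ≤ exp (-8) / (4 * (4 * √t) ^ d) := by
          gcongr
          · norm_num
          · linarith
end
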